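/- Let h' : ℤ^d × Ω → ℕ ∪ {∞} be a random field on a probability space carrying a measure-preserving, ergodic action (θ_z)_{z∈ℤ^d} of ℤ^d, which is translation-covariant: h'(x+z; θ_z ω) = h'(x; ω) for all x, z, ω. Let S ⊆ ℤ^d be a set generating ℤ^d as a group, and suppose that for each z ∈ S, almost surely, for every x ∈ ℤ^d, h'(x) = ∞ implies h'(x+z) = ∞. Then either almost surely h'(x) < ∞ for every x ∈ ℤ^d, or almost surely h'(x) = ∞ for every x ∈ ℤ^d. -/
import Mathlib


open scoped ENNReal
open MeasureTheory

/-- **Dichotomy for translation-covariant fields**: if `h'` is a translation-covariant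
random field with values in `ℕ ∪ {∞}` over an ergodic measure-preserving `ℤ^d`-action,
`S` generates `ℤ^d` as a group, and a.s. `h'(x) = ∞` implies `h'(x+z) = ∞` for `z ∈ S`,
then either a.s. `h'` is everywhere finite, or a.s. `h'` is everywhere infinite. -/
theorem covariant_field_dichotomy {d : ℕ} {Ω : Type*} [MeasurableSpace Ω]
    (P : Measure Ω) [IsProbabilityMeasure P]
    (θ : (Fin d → ℤ) → Ω → Ω)
    (hθ0 : θ 0 = id)
    (hθadd : ∀ z w : Fin d → ℤ, θ (z + w) = θ z ∘ θ w)
    (hθmeas : ∀ z : Fin d → ℤ, Measurable (θ z))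
    (hθP : ∀ z : Fin d → ℤ, P.map (θ z) = P)
    (hergodic : ∀ A : Set Ω, MeasurableSet A → (∀ z : Fin d → ℤ, θ z ⁻¹' A = A) →
      P A = 0 ∨ P A = 1)
    (h' : (Fin d → ℤ) → Ω → ℕ∞)
    (hmeas : ∀ x : Fin d → ℤ, Measurable (h' x))
    (hcov : ∀ (x z : Fin d → ℤ) (ω : Ω), h' (x + z) (θ z ω) = h' x ω)
    (S : Set (Fin d → ℤ)) (hS : AddSubgroup.closure S = ⊤)
    (hstep : ∀ z ∈ S, ∀ᵐ ω ∂P, ∀ x : Fin d → ℤ, h' x ω = ⊤ → h' (x + z) ω = ⊤) :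
    (∀ᵐ ω ∂P, ∀ x : Fin d → ℤ, h' x ω < ⊤) ∨ (∀ᵐ ω ∂P, ∀ x : Fin d → ℤ, h' x ω = ⊤) := by
  classical
  -- key covariance consequence: h' x (θ z ω) = h' (x - z) ω
  have hcov' : ∀ (x z : Fin d → ℤ) (ω : Ω), h' x (θ z ω) = h' (x - z) ω := by
    intro x z ω
    have := hcov (x - z) z ω
    rwa [sub_add_cancel] at this
  set C : (Fin d → ℤ) → Set Ω := fun x => {ω | h' x ω = ⊤} with hC
  have hCmeas : ∀ x, MeasurableSet (C x) := fun x =>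
    (hmeas x) (measurableSet_singleton ⊤)
  -- the event that some site is infinite
  set B : Set Ω := ⋃ x : Fin d → ℤ, C x with hBdef
  have hBmeas : MeasurableSet B := MeasurableSet.iUnion hCmeas
  have hpre : ∀ x z : Fin d → ℤ, θ z ⁻¹' C x = C (x - z) := by
    intro x z
    ext ω
    simp only [hC, Set.mem_preimage, Set.mem_setOf_eq, hcov']
  have hBinv : ∀ z : Fin d → ℤ, θ z ⁻¹' B = B := by
    intro z
    ext ω
    simp only [hBdef, Set.preimage_iUnion, Set.mem_iUnion, hpre]
    constructor
    · rintro ⟨x, hx⟩; exact ⟨x - z, hx⟩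
    · rintro ⟨x, hx⟩
      refine ⟨x + z, ?_⟩
      rwa [add_sub_cancel_right]
  rcases hergodic B hBmeas hBinv with h0 | h1
  · -- a.s. everywhere finite
    left
    have : ∀ᵐ ω ∂P, ω ∉ B := (measure_eq_zero_iff_ae_notMem).mp h0
    filter_upwards [this] with ω hω x
    rw [lt_top_iff_ne_top]
    intro hx
    exact hω (Set.mem_iUnion.mpr ⟨x, hx⟩)
  · -- a.s. some site infinite; show all sites infinite
    right
    -- all C x have the same probability
    have hCeq : ∀ x : Fin d → ℤ, P (C x) = P (C 0) := by
      intro x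
      have := hθP (-x)
      have h1' : P (θ (-x) ⁻¹' C 0) = P (C 0) := by
        conv_rhs => rw [← this]
        rw [Measure.map_apply (hθmeas (-x)) (hCmeas 0)]
      rw [hpre 0 (-x), zero_sub, neg_neg] at h1'
      exact h1'
    -- a.s. equivalence along steps z ∈ S
    have hiff : ∀ x : Fin d → ℤ, ∀ z ∈ S,
        ∀ᵐ ω ∂P, (h' x ω = ⊤ ↔ h' (x + z) ω = ⊤) := by
      intro x z hz
      have hsub : ∀ᵐ ω ∂P, ω ∈ C x → ω ∈ C (x + z) := by
        filter_upwards [hstep z hz] with ω hω hx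
        exact hω x hx
      have hdiff1 : P (C x \ C (x + z)) = 0 := by
        have h := ae_iff.mp hsub
        refine measure_mono_null ?_ h
        intro ω hω
        simp only [Set.mem_setOf_eq]
        intro h
        exact hω.2 (h hω.1)
      have key1 : P (C x) = P (C x ∩ C (x + z)) := by
        have := measure_inter_add_diff (C x) (hCmeas (x + z)) (μ := P)
        rw [hdiff1, add_zero] at this
        exact this.symm
      have key2 : P (C (x + z)) = P (C (x + z) ∩ C x) + P (C (x + z) \ C x) :=
        (measure_inter_add_diff (C (x + z)) (hCmeas x) (μ := P)).symm
      have hdiff2 : P (C (x + z) \ C x) = 0 := by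
        have hPeq : P (C (x + z)) = P (C x) := by rw [hCeq (x + z), hCeq x]
        rw [hPeq, key1, Set.inter_comm (C (x + z)) (C x)] at key2
        have hne : P (C x ∩ C (x + z)) ≠ ⊤ := measure_ne_top P _
        have : P (C x ∩ C (x + z)) + 0 = P (C x ∩ C (x + z)) + P (C (x + z) \ C x) := by
          rw [add_zero]; exact key2
        exact ((ENNReal.add_right_inj hne).mp this).symm
      have h2 : ∀ᵐ ω ∂P, ω ∈ C (x + z) → ω ∈ C x := by
        rw [ae_iff]
        refine measure_mono_null ?_ hdiff2
        intro ω hω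
        simp only [Set.mem_setOf_eq, Classical.not_imp] at hω
        exact ⟨hω.1, hω.2⟩
      filter_upwards [hsub, h2] with ω hω1 hω2
      exact ⟨hω1, hω2⟩
    have hSc : S.Countable := S.to_countable
    have hall : ∀ᵐ ω ∂P, ∀ x : Fin d → ℤ, ∀ z ∈ S,
        (h' x ω = ⊤ ↔ h' (x + z) ω = ⊤) := by
      rw [ae_all_iff]
      intro x
      rw [ae_ball_iff hSc]
      exact hiff x
    have hB1 : ∀ᵐ ω ∂P, ω ∈ B := by
      have : P Bᶜ = 0 := by
        rw [prob_compl_eq_zero_iff hBmeas]; exact h1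
      filter_upwards [(measure_eq_zero_iff_ae_notMem).mp this] with ω hω
      simpa using hω
    filter_upwards [hall, hB1] with ω hω hωB x
    obtain ⟨x₀, hx₀⟩ := Set.mem_iUnion.mp hωB
    -- subgroup of translations preserving infinitude at ω
    set T : AddSubgroup (Fin d → ℤ) :=
      { carrier := {z | ∀ y : Fin d → ℤ, h' y ω = ⊤ ↔ h' (y + z) ω = ⊤}
        zero_mem' := by intro y; simp
        add_mem' := by
          intro a b ha hb y
          rw [ha y, ← add_assoc]
          exact hb (y + a)
        neg_mem' := by
          intro a ha y
          have := ha (y - a)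
          rw [sub_add_cancel] at this
          rw [← this, sub_eq_add_neg] } with hT
    have hST : AddSubgroup.closure S ≤ T := AddSubgroup.closure_le T |>.mpr (fun z hz y => hω y z hz)
    have hxT : x - x₀ ∈ T := by
      rw [hS] at hST
      exact hST trivial
    have := (hxT x₀).mp hx₀
    rwa [add_sub_cancel] at this
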